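/- arXiv:1201.1805 — 10 statements merged into one kernel-verified Lean document; each statement's English description precedes it below -/
import Mathlib

section
/- Let f_1, ..., f_n : S → ℤ be functions on a set S and let P be a set of pairs (E, E') of elements of S. Suppose each f_i satisfies the tropical relation: for every (E,E') in P with associated values (L,M), f_i(L) + f_i(M) = max(f_i(E), f_i(E')). Then the sum Σ f_i satisfies the same tropical relation for all pairs in P if and only if for every pair (E,E') in P and all indices i, j, (f_i(E) - f_i(E'))*(f_j(E) - f_j(E')) ≥ 0. -/
open Finset

private lemma abs_sum_eq_iff {n : ℕ} (d : Fin n → ℤ) :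
    |∑ i, d i| = ∑ i, |d i| ↔ ∀ i j, d i * d j ≥ 0 := by
  constructor
  · intro h i j
    by_contra hlt
    push_neg at hlt
    rcases mul_neg_iff.mp hlt with ⟨hi, hj⟩ | ⟨hi, hj⟩
    · -- d i > 0, d j < 0
      have h1 : ∑ k, d k < ∑ k, |d k| := by
        refine Finset.sum_lt_sum (fun k _ => le_abs_self _) ⟨j, mem_univ j, ?_⟩
        rw [abs_of_neg hj]; linarith
      have h2 : -(∑ k, d k) < ∑ k, |d k| := by
        rw [← Finset.sum_neg_distrib]
        refine Finset.sum_lt_sum (fun k _ => neg_le_abs _) ⟨i, mem_univ i, ?_⟩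
        rw [abs_of_pos hi]; linarith
      have := abs_lt.mpr ⟨by linarith, h1⟩
      omega
    · -- d i < 0, d j > 0
      have h1 : ∑ k, d k < ∑ k, |d k| := by
        refine Finset.sum_lt_sum (fun k _ => le_abs_self _) ⟨i, mem_univ i, ?_⟩
        rw [abs_of_neg hi]; linarith
      have h2 : -(∑ k, d k) < ∑ k, |d k| := by
        rw [← Finset.sum_neg_distrib]
        refine Finset.sum_lt_sum (fun k _ => neg_le_abs _) ⟨j, mem_univ j, ?_⟩
        rw [abs_of_pos hj]; linarith
      have := abs_lt.mpr ⟨by linarith, h1⟩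
      omega
  · intro h
    by_cases hpos : ∀ i, 0 ≤ d i
    · rw [abs_of_nonneg (Finset.sum_nonneg fun i _ => hpos i)]
      exact Finset.sum_congr rfl fun i _ => (abs_of_nonneg (hpos i)).symm
    · push_neg at hpos
      obtain ⟨i0, hi0⟩ := hpos
      have hneg : ∀ i, d i ≤ 0 := by
        intro i
        have := h i i0
        nlinarith
      rw [abs_of_nonpos (Finset.sum_nonpos fun i _ => hneg i), ← Finset.sum_neg_distrib]
      exact Finset.sum_congr rfl fun i _ => (abs_of_nonpos (hneg i)).symm

private lemma sum_max_eq_iff {n : ℕ} (a b : Fin n → ℤ) :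
    (∑ i, max (a i) (b i)) = max (∑ i, a i) (∑ i, b i) ↔
      ∀ i j, (a i - b i) * (a j - b j) ≥ 0 := by
  have key : ∀ x y : ℤ, 2 * max x y = x + y + |x - y| := by
    intro x y
    rcases le_total x y with h | h
    · rw [max_eq_right h, abs_of_nonpos (by linarith)]; ring
    · rw [max_eq_left h, abs_of_nonneg (by linarith)]; ring
  rw [← abs_sum_eq_iff (fun i => a i - b i)]
  constructor
  · intro h
    have h2 := congrArg (2 * ·) h
    simp only [Finset.mul_sum, key] at h2
    rw [Finset.sum_add_distrib, Finset.sum_add_distrib, ← Finset.sum_sub_distrib] at h2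
    omega
  · intro h
    have : 2 * (∑ i, max (a i) (b i)) = 2 * max (∑ i, a i) (∑ i, b i) := by
      rw [Finset.mul_sum]
      simp only [key]
      rw [Finset.sum_add_distrib, Finset.sum_add_distrib, ← Finset.sum_sub_distrib, h]
    omega

/-- Abstract frieze datum: a set `S`, a set `P` of pairs `(E, E')` in `S`, and an
assignment `ends` of end terms `(L, M)` to each pair. A function `f : S → ℤ` satisfies
the tropical relation if `f L + f M = max (f E) (f E')` for every pair in `P`. -/
theorem sum_tropical_iff_pairwise_compatible (S : Type*) (P : Set (S × S))
    (ends : S × S → S × S) (n : ℕ) (f : Fin n → S → ℤ)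
    (hf : ∀ i, ∀ p ∈ P, f i (ends p).1 + f i (ends p).2 = max (f i p.1) (f i p.2)) :
    (∀ p ∈ P, (∑ i, f i (ends p).1) + (∑ i, f i (ends p).2) =
        max (∑ i, f i p.1) (∑ i, f i p.2)) ↔
    (∀ p ∈ P, ∀ i j, (f i p.1 - f i p.2) * (f j p.1 - f j p.2) ≥ 0) := by
  have hsum : ∀ p ∈ P, (∑ i, f i (ends p).1) + (∑ i, f i (ends p).2) =
      ∑ i, max (f i p.1) (f i p.2) := by
    intro p hp
    rw [← Finset.sum_add_distrib]
    exact Finset.sum_congr rfl fun i _ => hf i p hp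
  constructor
  · intro h p hp
    exact (sum_max_eq_iff (fun i => f i p.1) (fun i => f i p.2)).mp
      ((hsum p hp).symm.trans (h p hp))
  · intro h p hp
    rw [hsum p hp]
    exact (sum_max_eq_iff (fun i => f i p.1) (fun i => f i p.2)).mpr (h p hp)
end

section
/- For functions f, g : S → ℤ both satisfying the tropical relation f(L) + f(M) = max(f(E), f(E')) for a given frieze datum, the difference f - g satisfies the tropical relation if and only if for all pairs (E, E') one has |f(E) - f(E')| ≥ |g(E) - g(E')| and (f(E) - f(E'))*(g(E) - g(E')) ≥ 0. -/

lemma key_aux (x1 x2 y1 y2 : ℤ) :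
    max x1 x2 - max y1 y2 = max (x1 - y1) (x2 - y2) ↔
    |x1 - x2| ≥ |y1 - y2| ∧ (x1 - x2) * (y1 - y2) ≥ 0 := by
  rcases le_total x1 x2 with h1 | h1 <;> rcases le_total y1 y2 with h2 | h2
  · rw [abs_of_nonpos (by omega), abs_of_nonpos (by omega)]
    constructor
    · intro h
      exact ⟨by omega, mul_nonneg_of_nonpos_of_nonpos (by omega) (by omega)⟩
    · intro ⟨ha, _⟩; omega
  · rw [abs_of_nonpos (by omega), abs_of_nonneg (by omega)]
    constructor
    · intro h
      have : y1 = y2 := by omega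
      exact ⟨by omega, by rw [this]; simp⟩
    · intro ⟨ha, hb⟩
      have hz : (x1 - x2) * (y1 - y2) = 0 :=
        le_antisymm (mul_nonpos_of_nonpos_of_nonneg (by omega) (by omega)) hb
      rcases mul_eq_zero.mp hz with h | h <;> omega
  · rw [abs_of_nonneg (by omega), abs_of_nonpos (by omega)]
    constructor
    · intro h
      have : y1 = y2 := by omega
      exact ⟨by omega, by rw [this]; simp⟩
    · intro ⟨ha, hb⟩
      have hz : (x1 - x2) * (y1 - y2) = 0 :=
        le_antisymm (mul_nonpos_of_nonneg_of_nonpos (by omega) (by omega)) hb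
      rcases mul_eq_zero.mp hz with h | h <;> omega
  · rw [abs_of_nonneg (by omega), abs_of_nonneg (by omega)]
    constructor
    · intro h
      exact ⟨by omega, mul_nonneg (by omega) (by omega)⟩
    · intro ⟨ha, _⟩; omega

/-- For two tropical friezes `f`, `g` on an abstract frieze datum, the difference `f - g`
is a tropical frieze iff `f` and `g` are strongly compatible. -/
theorem sub_tropical_iff_strongly_compatible (S : Type*) (P : Set (S × S))
    (ends : S × S → S × S) (f g : S → ℤ)
    (hf : ∀ p ∈ P, f (ends p).1 + f (ends p).2 = max (f p.1) (f p.2))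
    (hg : ∀ p ∈ P, g (ends p).1 + g (ends p).2 = max (g p.1) (g p.2)) :
    (∀ p ∈ P, (f (ends p).1 - g (ends p).1) + (f (ends p).2 - g (ends p).2) =
        max (f p.1 - g p.1) (f p.2 - g p.2)) ↔
    (∀ p ∈ P, |f p.1 - f p.2| ≥ |g p.1 - g p.2| ∧
        (f p.1 - f p.2) * (g p.1 - g p.2) ≥ 0) := by
  constructor <;> intro h p hp <;>
    have h1 := hf p hp <;> have h2 := hg p hp <;> have h3 := h p hp
  · exact (key_aux _ _ _ _).mp (by omega)
  · have := (key_aux (f p.1) (f p.2) (g p.1) (g p.2)).mpr h3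
    omega
end

section
/- Let f : ℤ × ℤ → ℤ be a function on the vertices of the translation quiver ℤA_n satisfying the tropical frieze rule f(i, j) + f(i+1, j) = max(f(i+1, j-1) + f(i, j+1), 0) for all i ∈ ℤ and 1 ≤ j ≤ n, with the convention f(i, 0) = f(i, n+1) = 0. If f takes only nonnegative values, then f is identically zero. -/
theorem tropical_frieze_nonneg_eq_zero (n : ℕ) (f : ℤ × ℤ → ℤ)
    (hb0 : ∀ i : ℤ, f (i, 0) = 0) (hb1 : ∀ i : ℤ, f (i, (n : ℤ) + 1) = 0)
    (hrule : ∀ i j : ℤ, 1 ≤ j → j ≤ (n : ℤ) →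
      f (i, j) + f (i + 1, j) = max (f (i + 1, j - 1) + f (i, j + 1)) 0)
    (hpos : ∀ i j : ℤ, 1 ≤ j → j ≤ (n : ℤ) → 0 ≤ f (i, j)) :
    ∀ i j : ℤ, 1 ≤ j → j ≤ (n : ℤ) → f (i, j) = 0 := by
  -- nonnegativity at every row 0 ≤ j ≤ n+1
  have hpos' : ∀ i j : ℤ, 0 ≤ j → j ≤ (n : ℤ) + 1 → 0 ≤ f (i, j) := by
    intro i j h0 h1
    rcases eq_or_lt_of_le h0 with h | h
    · rw [← h, hb0]
    rcases eq_or_lt_of_le h1 with h' | h'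
    · rw [h', hb1]
    · exact hpos i j h (by omega)
  -- the max is never clipped: exact additive rule
  have heq : ∀ i j : ℤ, 1 ≤ j → j ≤ (n : ℤ) →
      f (i, j) + f (i + 1, j) = f (i + 1, j - 1) + f (i, j + 1) := by
    intro i j h1 h2
    have hA : 0 ≤ f (i + 1, j - 1) := hpos' (i + 1) (j - 1) (by omega) (by omega)
    have hB : 0 ≤ f (i, j + 1) := hpos' i (j + 1) (by omega) (by omega)
    have := hrule i j h1 h2
    rw [max_eq_left (by linarith)] at this
    exact this
  -- f(i, 1+k) = f(i+1, k) + f(i,1) for 0 ≤ k ≤ n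
  have key : ∀ k : ℕ, ∀ i : ℤ, (1 + k : ℤ) ≤ (n : ℤ) + 1 →
      f (i, 1 + (k : ℤ)) = f (i + 1, (k : ℤ)) + f (i, 1) := by
    intro k
    induction k with
    | zero => intro i _; simp [hb0]
    | succ k ih =>
      intro i hk
      push_cast at hk ⊢
      have h1 := heq i (1 + k) (by omega) (by omega)
      have h2 := ih i (by omega)
      have e1 : (1 + (k : ℤ)) - 1 = (k : ℤ) := by ring
      have e2 : (1 + (k : ℤ)) + 1 = 1 + ((k : ℤ) + 1) := by ring
      rw [e1, e2] at h1
      have e3 : ((k : ℤ) + 1) = 1 + (k : ℤ) := by ring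
      rw [e3]
      have e4 : (1 : ℤ) + ((k : ℤ) + 1) = 1 + (1 + (k : ℤ)) := by ring
      rw [e4] at h1
      linarith
  intro i0 j0 hj1 hj2
  have hn : (1 : ℤ) ≤ (n : ℤ) := le_trans hj1 hj2
  -- f(i,1) = 0 for all i
  have h1 : ∀ i : ℤ, f (i, 1) = 0 := by
    intro i
    have hk := key n i (by omega)
    have e : (1 : ℤ) + (n : ℤ) = (n : ℤ) + 1 := by ring
    rw [e, hb1] at hk
    have hA : 0 ≤ f (i + 1, (n : ℤ)) := hpos (i + 1) _ hn le_rfl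
    have hB : 0 ≤ f (i, 1) := hpos i 1 le_rfl hn
    linarith
  -- propagate zero to all rows
  have hz : ∀ k : ℕ, ∀ i : ℤ, (1 + k : ℤ) ≤ (n : ℤ) → f (i, 1 + (k : ℤ)) = 0 := by
    intro k
    induction k with
    | zero => intro i _; simpa using h1 i
    | succ k ih =>
      intro i hk
      push_cast at hk ⊢
      have hkey := key (k + 1) i (by push_cast; omega)
      push_cast at hkey
      rw [hkey]
      have e3 : ((k : ℤ) + 1) = 1 + (k : ℤ) := by ring
      rw [e3, ih (i + 1) (by omega), h1 i]
      ring
  -- conclude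
  obtain ⟨k, hk⟩ : ∃ k : ℕ, j0 = 1 + (k : ℤ) := ⟨(j0 - 1).toNat, by omega⟩
  rw [hk]
  exact hz k i0 (by omega)
end

section
/- Let f : ℤ × ℤ → ℤ satisfy the tropical frieze rule f(i, j) + f(i+1, j) = max(f(i+1, j-1) + f(i, j+1), 0) for all i ∈ ℤ and 1 ≤ j ≤ n, with f(i, 0) = f(i, n+1) = 0, and suppose f takes only nonpositive values. Then f is identically zero. -/
theorem tropical_frieze_nonpos_eq_zero (n : ℕ) (f : ℤ × ℤ → ℤ)
    (hb0 : ∀ i : ℤ, f (i, 0) = 0) (hb1 : ∀ i : ℤ, f (i, (n : ℤ) + 1) = 0)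
    (hrule : ∀ i j : ℤ, 1 ≤ j → j ≤ (n : ℤ) →
      f (i, j) + f (i + 1, j) = max (f (i + 1, j - 1) + f (i, j + 1)) 0)
    (hneg : ∀ i j : ℤ, 1 ≤ j → j ≤ (n : ℤ) → f (i, j) ≤ 0) :
    ∀ i j : ℤ, 1 ≤ j → j ≤ (n : ℤ) → f (i, j) = 0 := by
  intro i j h1 h2
  have h := hrule i j h1 h2
  have hm : (0 : ℤ) ≤ max (f (i + 1, j - 1) + f (i, j + 1)) 0 := le_max_right _ _
  have ha := hneg i j h1 h2
  have hb := hneg (i + 1) j h1 h2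
  linarith
end

section
/- Every additive function on the translation quiver ℤA_n taking only nonnegative values is zero: if g : ℤ × {1,...,n} → ℤ satisfies g(i, j) + g(i+1, j) = g(i+1, j-1) + g(i, j+1) for all i ∈ ℤ, 1 ≤ j ≤ n (with the convention g(i,0) = g(i,n+1) = 0), and g(i,j) ≥ 0 for all (i,j), then g is identically zero. -/
theorem additive_nonneg_eq_zero (n : ℕ) (g : ℤ × ℤ → ℤ)
    (hb0 : ∀ i : ℤ, g (i, 0) = 0) (hb1 : ∀ i : ℤ, g (i, (n : ℤ) + 1) = 0)
    (hrule : ∀ i j : ℤ, 1 ≤ j → j ≤ (n : ℤ) →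
      g (i, j) + g (i + 1, j) = g (i + 1, j - 1) + g (i, j + 1))
    (hpos : ∀ i j : ℤ, 1 ≤ j → j ≤ (n : ℤ) → 0 ≤ g (i, j)) :
    ∀ i j : ℤ, 1 ≤ j → j ≤ (n : ℤ) → g (i, j) = 0 := by
  -- diagonal difference is constant in j
  have dconst : ∀ i : ℤ, ∀ k : ℕ, (k : ℤ) ≤ (n : ℤ) →
      g (i, (k : ℤ) + 1) - g (i + 1, (k : ℤ)) = g (i, 1) := by
    intro i k
    induction k with
    | zero =>
      intro _
      have := hb0 (i + 1)
      norm_num [this]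
    | succ k ih =>
      intro hk
      push_cast at hk ⊢
      have hk' : (k : ℤ) ≤ (n : ℤ) := by omega
      have hk1 : (1 : ℤ) ≤ (k : ℤ) + 1 := by omega
      have h1 := hrule i ((k : ℤ) + 1) hk1 (by omega)
      have h2 := ih hk'
      have e : ((k : ℤ) + 1) - 1 = (k : ℤ) := by ring
      rw [e] at h1
      linarith
  by_cases hn : 1 ≤ (n : ℤ)
  · -- g(i,1) = 0 for all i
    have h1 : ∀ i : ℤ, g (i, 1) = 0 := by
      intro i
      have hd := dconst i n le_rfl
      rw [hb1 i] at hd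
      have hp1 := hpos i 1 le_rfl hn
      have hp2 := hpos (i + 1) (n : ℤ) hn le_rfl
      linarith
    -- induct along the diagonal
    have key : ∀ k : ℕ, (k : ℤ) ≤ (n : ℤ) → ∀ i : ℤ, g (i, (k : ℤ) + 1) = 0 := by
      intro k
      induction k with
      | zero => intro _ i; exact_mod_cast h1 i
      | succ k ih =>
        intro hk i
        push_cast at hk ⊢
        have hd := dconst i (k + 1) (by exact_mod_cast hk)
        push_cast at hd
        have h2 := ih (by omega) (i + 1)
        have h3 := h1 i
        linarith
    intro i j hj hjn
    have hk : ∃ k : ℕ, j = (k : ℤ) + 1 := ⟨(j - 1).toNat, by omega⟩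
    obtain ⟨k, rfl⟩ := hk
    exact key k (by omega) i
  · intro i j hj hjn
    omega
end

section
/- Let f : ℤ × ℤ → ℤ satisfy the tropical frieze rule f(i, j) + f(i+1, j) = max(f(i+1, j-1) + f(i, j+1), 0) for i ∈ ℤ, 1 ≤ j ≤ n, with boundary convention f(i, 0) = f(i, n+1) = 0. Then f is invariant under the glide reflection: f(i, j) = f(i + j + 1, n + 1 - j) for all i ∈ ℤ, 1 ≤ j ≤ n. In particular, f is periodic: f(i, j) = f(i + n + 3, j) for all i, j. -/
lemma exp_le_of_bound (A B : ℝ) (hA : 0 < A) (d e : ℤ)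
    (h : ∀ t : ℝ, 1 ≤ t → A * t ^ d ≤ B * t ^ e) : d ≤ e := by
  by_contra hlt
  push_neg at hlt
  have key : ∀ t : ℝ, 1 ≤ t → A * t ≤ B := by
    intro t ht
    have ht0 : (0:ℝ) < t := lt_of_lt_of_le one_pos ht
    have h1 := h t ht
    have hpe : (0:ℝ) < t ^ e := zpow_pos ht0 e
    have h2 : A * t ^ (d - e) ≤ B := by
      have : A * t ^ (d - e) * t ^ e ≤ B * t ^ e := by
        rw [mul_assoc, ← zpow_add₀ ht0.ne']
        rw [show d - e + e = d from by ring]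
        exact h1
      exact le_of_mul_le_mul_right this hpe
    have h3 : t ≤ t ^ (d - e) := by
      calc t = t ^ (1:ℤ) := (zpow_one t).symm
      _ ≤ t ^ (d - e) := by
        apply zpow_le_zpow_right₀ ht
        omega
    nlinarith
  have hB : 0 < B := lt_of_lt_of_le (by nlinarith) (key 1 le_rfl)
  have := key (max 1 ((B+1)/A)) (le_max_left _ _)
  have h4 : A * ((B+1)/A) ≤ A * max 1 ((B+1)/A) := by
    apply mul_le_mul_of_nonneg_left (le_max_right _ _) hA.le
  rw [mul_div_cancel₀ _ hA.ne'] at h4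
  linarith


noncomputable def Xf (n : ℕ) (g : ℕ → ℕ → ℤ) (t : ℝ) : ℕ → ℕ → ℝ
  | 0, j => t ^ g 0 j
  | m+1, 0 => 1
  | m+1, j+1 =>
    if j + 1 ≤ n then (Xf n g t (m+1) j * Xf n g t m (j+2) + 1) / Xf n g t m (j+1)
    else 1
  termination_by m j => (m, j)

lemma Xf_pos (n : ℕ) (g : ℕ → ℕ → ℤ) (t : ℝ) (ht : 0 < t) : ∀ m j, 0 < Xf n g t m j := by
  intro m
  induction m with
  | zero => intro j; rw [Xf]; exact zpow_pos ht _
  | succ m ih =>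
    intro j
    induction j with
    | zero => rw [Xf]; exact one_pos
    | succ j ihj =>
      rw [Xf]
      split
      · exact div_pos (add_pos (mul_pos ihj (ih _)) one_pos) (ih _)
      · exact one_pos

lemma Xf_b0 (n : ℕ) (g : ℕ → ℕ → ℤ) (t : ℝ) (hg0 : ∀ m, g m 0 = 0) :
    ∀ m, Xf n g t m 0 = 1 := by
  intro m
  cases m with
  | zero => rw [Xf, hg0]; norm_num
  | succ m => rw [Xf]

lemma Xf_b1 (n : ℕ) (g : ℕ → ℕ → ℤ) (t : ℝ) (hg1 : ∀ m, g m (n+1) = 0) :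
    ∀ m, Xf n g t m (n+1) = 1 := by
  intro m
  cases m with
  | zero => rw [Xf, hg1]; norm_num
  | succ m => rw [Xf]; simp

lemma Xf_rule (n : ℕ) (g : ℕ → ℕ → ℤ) (t : ℝ) (ht : 0 < t) :
    ∀ m j, 1 ≤ j → j ≤ n →
      Xf n g t m j * Xf n g t (m+1) j = Xf n g t (m+1) (j-1) * Xf n g t m (j+1) + 1 := by
  intro m j h1 h2
  obtain ⟨j', rfl⟩ : ∃ j', j = j' + 1 := ⟨j - 1, by omega⟩
  have hpos := Xf_pos n g t ht m (j' + 1)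
  rw [show j' + 1 - 1 = j' from rfl]
  rw [Xf, if_pos h2]
  rw [mul_div_cancel₀ _ hpos.ne']


theorem frieze_glide (n : ℕ) (x : ℕ → ℕ → ℝ)
    (pos : ∀ m j, 0 < x m j)
    (b0 : ∀ m, x m 0 = 1) (b1 : ∀ m, x m (n+1) = 1)
    (rule : ∀ m j, 1 ≤ j → j ≤ n → x m j * x (m+1) j = x (m+1) (j-1) * x m (j+1) + 1) :
    ∀ j, j ≤ n → ∀ k m, j + k = n + 1 → x m j = x (m + j + 1) k := by
  -- L1 : diagonal recurrence
  have L1 : ∀ j, 1 ≤ j → j ≤ n → ∀ m,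
      x m (j+1) = x m 1 * x (m+1) j - x (m+2) (j-1) := by
    intro j hj
    induction j, hj using Nat.le_induction with
    | base =>
      intro hn m
      have hr := rule m 1 le_rfl hn
      rw [show (1:ℕ) - 1 = 0 from rfl] at hr ⊢
      rw [b0 (m+1)] at hr
      rw [b0 (m+2)]
      linarith
    | succ j hj ih =>
      intro hn m
      have ihm := ih (by omega) m
      have hr1 := rule m (j+1) (by omega) hn
      have hr2 := rule (m+1) j hj (by omega)
      rw [show j + 1 - 1 = j from rfl] at hr1 ⊢
      have hc : (0:ℝ) < x (m+1) j := pos _ _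
      have key : x (m+1) j * x m (j+1+1) =
          x (m+1) j * (x m 1 * x (m+1) (j+1) - x (m+2) j) := by
        linear_combination (-1 : ℝ) * hr1 + x (m+1) (j+1) * ihm + hr2
      exact mul_left_cancel₀ hc.ne' key
  -- L3 : glide for j = 1
  have L3 : ∀ p, 1 ≤ n → x p 1 = x (p+2) n := by
    intro p hn
    have h1 := L1 n hn le_rfl p
    rw [b1 p] at h1
    have h2 := rule (p+1) n hn le_rfl
    rw [b1 (p+1)] at h2
    have hc : (0:ℝ) < x (p+1) n := pos _ _
    have key : x (p+1) n * x p 1 = x (p+1) n * x (p+2) n := by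
      linear_combination (-1:ℝ) * h1 - h2
    exact mul_left_cancel₀ hc.ne' key
  -- L4 : vertical recurrence
  have L4 : ∀ r, 1 ≤ r → ∀ k, 1 ≤ k → r + k = n → ∀ p,
      x (p+r+2) k = x p 1 * x (p+r+2) (k+1) - x (p+r+2) (k+2) := by
    intro r hr
    induction r, hr using Nat.le_induction with
    | base =>
      intro k hk hkn p
      have hk1 : k + 1 = n := by omega
      have hk2 : k + 2 = n + 1 := by omega
      rw [hk1, hk2, b1, L3 p (by omega)]
      have h2 := rule (p+2) n (by omega) le_rfl
      rw [b1 (p+2)] at h2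
      rw [show k = n - 1 from by omega]
      rw [show p + 1 + 2 = p + 3 from by omega] at h2 ⊢
      linarith [h2]
    | succ r hr ih =>
      intro k hk hkn p
      rw [show p + (r+1) + 2 = (p+r+2) + 1 from by omega]
      have ihm := ih (k+1) (by omega) (by omega) p
      have hr1 := rule (p+r+2) (k+1) (by omega) (by omega)
      have hr2 := rule (p+r+2) (k+2) (by omega) (by omega)
      rw [show k + 1 - 1 = k from rfl] at hr1
      rw [show k + 2 - 1 = k + 1 from rfl] at hr2
      rw [show k + 1 + 1 = k + 2 from rfl] at hr1
      rw [show k + 2 + 1 = k + 3 from rfl] at hr2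
      have hc : (0:ℝ) < x (p+r+2) (k+2) := pos _ _
      have key : x (p+r+2) (k+2) * x (p+r+2+1) k =
          x (p+r+2) (k+2) * (x p 1 * x (p+r+2+1) (k+1) - x (p+r+2+1) (k+2)) := by
        linear_combination (-1:ℝ) * hr1 + x (p+r+2+1) (k+1) * ihm + hr2
      exact mul_left_cancel₀ hc.ne' key
  -- main glide by strong induction
  intro j
  induction j using Nat.strong_induction_on with
  | _ j ih =>
    match j with
    | 0 =>
      intro _ k m hk
      rw [show k = n + 1 from by omega, b0, b1]
    | 1 =>
      intro h1 k m hk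
      rw [show k = n from by omega, show m + 1 + 1 = m + 2 from rfl]
      exact L3 m (by omega)
    | (jj+2) =>
      intro hjn k m hk
      have h1 := L1 (jj+1) (by omega) (by omega) m
      rw [show jj + 1 - 1 = jj from rfl] at h1
      have g1 := ih (jj+1) (by omega) (by omega) (k+1) (m+1) (by omega)
      have g0 := ih jj (by omega) (by omega) (k+2) (m+2) (by omega)
      have h4 := L4 (jj+1) (by omega) k (by omega) (by omega) m
      rw [show m + 1 + (jj+1) + 1 = m + (jj+1) + 2 from by omega] at g1
      rw [show m + 2 + jj + 1 = m + (jj+1) + 2 from by omega] at g0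
      rw [show m + (jj+2) + 1 = m + (jj+1) + 2 from by omega]
      rw [show jj + 1 + 1 = jj + 2 from rfl] at h1
      rw [g1, g0] at h1
      linarith [h1, h4]

lemma sandwich (n : ℕ) (g : ℕ → ℕ → ℤ)
    (hg0 : ∀ m, g m 0 = 0) (hg1 : ∀ m, g m (n+1) = 0)
    (hgr : ∀ m r, 1 ≤ r → r ≤ n →
      g m r + g (m+1) r = max (g (m+1) (r-1) + g m (r+1)) 0) :
    ∀ m j, j ≤ n + 1 → ∃ A B : ℝ, 0 < A ∧ A ≤ 1 ∧ 1 ≤ B ∧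
      ∀ t : ℝ, 1 ≤ t →
        A * t ^ g m j ≤ Xf n g t m j ∧ Xf n g t m j ≤ B * t ^ g m j := by
  intro m
  induction m with
  | zero =>
    intro j hj
    exact ⟨1, 1, one_pos, le_rfl, le_rfl, fun t ht => by rw [Xf]; norm_num⟩
  | succ m ihm =>
    intro j
    induction j with
    | zero =>
      intro _
      refine ⟨1, 1, one_pos, le_rfl, le_rfl, fun t ht => ?_⟩
      rw [Xf, hg0]; norm_num
    | succ j ihj =>
      intro hj
      by_cases hcase : j + 1 ≤ n
      · obtain ⟨A1, B1, hA1, hA1', hB1, H1⟩ := ihj (by omega)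
        obtain ⟨A0, B0, hA0, hA0', hB0, H0⟩ := ihm (j+1) (by omega)
        obtain ⟨A2, B2, hA2, hA2', hB2, H2⟩ := ihm (j+2) (by omega)
        refine ⟨A1*A2/B0, (B1*B2+1)/A0, by positivity, ?_, ?_, ?_⟩
        · rw [div_le_one (by positivity)]; nlinarith
        · rw [le_div_iff₀ hA0]; nlinarith
        intro t ht
        have ht0 : (0:ℝ) < t := lt_of_lt_of_le one_pos ht
        have hX : Xf n g t (m+1) (j+1) =
            (Xf n g t (m+1) j * Xf n g t m (j+2) + 1) / Xf n g t m (j+1) := by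
          rw [Xf, if_pos hcase]
        have hmax : max (g (m+1) j + g m (j+2)) 0 = g (m+1) (j+1) + g m (j+1) := by
          have h := hgr m (j+1) (by omega) hcase
          rw [show j + 1 - 1 = j from rfl, show j + 1 + 1 = j + 2 from rfl] at h
          omega
        obtain ⟨l1, u1⟩ := H1 t ht
        obtain ⟨l0, u0⟩ := H0 t ht
        obtain ⟨l2, u2⟩ := H2 t ht
        set a := g (m+1) j with ha
        set b := g m (j+2) with hb
        set c := g m (j+1) with hc
        set d := g (m+1) (j+1) with hd
        have hposden : 0 < Xf n g t m (j+1) := Xf_pos n g t ht0 _ _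
        have hden_lb : A0 * t ^ c ≤ Xf n g t m (j+1) := l0
        have hden_ub : Xf n g t m (j+1) ≤ B0 * t ^ c := u0
        have htab : t ^ d * t ^ c = t ^ max (a+b) 0 := by
          rw [← zpow_add₀ ht0.ne', hmax]
        have htpos : ∀ e : ℤ, (0:ℝ) < t ^ e := fun e => zpow_pos ht0 e
        have hmax_le : t ^ max (a+b) 0 ≤ t ^ (a+b) + 1 := by
          rcases le_total (a+b) 0 with h | h
          · rw [max_eq_right h, zpow_zero]
            linarith [htpos (a+b)]
          · rw [max_eq_left h]
            linarith
        have hab_le : t ^ (a+b) ≤ t ^ max (a+b) 0 :=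
          zpow_le_zpow_right₀ ht (le_max_left _ _)
        have hone_le : (1:ℝ) ≤ t ^ max (a+b) 0 := by
          calc (1:ℝ) = t ^ (0:ℤ) := by norm_num
          _ ≤ t ^ max (a+b) 0 := zpow_le_zpow_right₀ ht (le_max_right _ _)
        have hzab : t ^ a * t ^ b = t ^ (a+b) := (zpow_add₀ ht0.ne' a b).symm
        constructor
        · rw [hX, le_div_iff₀ hposden]
          calc A1*A2/B0 * t ^ d * Xf n g t m (j+1)
              ≤ A1*A2/B0 * t ^ d * (B0 * t ^ c) := by
                apply mul_le_mul_of_nonneg_left hden_ub (by positivity)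
          _ = A1*A2 * (t ^ d * t ^ c) := by field_simp
          _ = A1*A2 * t ^ max (a+b) 0 := by rw [htab]
          _ ≤ A1*A2 * (t ^ (a+b) + 1) := by
                apply mul_le_mul_of_nonneg_left hmax_le (by positivity)
          _ = A1*A2 * (t ^ a * t ^ b) + A1*A2 := by rw [hzab]; ring
          _ ≤ (A1 * t ^ a) * (A2 * t ^ b) + 1 := by
                have : A1*A2 ≤ 1 := by nlinarith
                have h2 : A1*A2 * (t ^ a * t ^ b) = (A1 * t ^ a) * (A2 * t ^ b) := by ring
                linarith [h2]
          _ ≤ Xf n g t (m+1) j * Xf n g t m (j+2) + 1 := by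
                have p1 : (0:ℝ) < A1 * t ^ a := by positivity
                have p2 : (0:ℝ) < A2 * t ^ b := by positivity
                nlinarith [Xf_pos n g t ht0 (m+1) j, Xf_pos n g t ht0 m (j+2)]
        · rw [hX, div_le_iff₀ hposden]
          calc Xf n g t (m+1) j * Xf n g t m (j+2) + 1
              ≤ (B1 * t ^ a) * (B2 * t ^ b) + 1 := by
                have p1 : (0:ℝ) < Xf n g t (m+1) j := Xf_pos n g t ht0 _ _
                have p2 : (0:ℝ) < Xf n g t m (j+2) := Xf_pos n g t ht0 _ _
                nlinarith
          _ = B1*B2 * t ^ (a+b) + 1 := by rw [← hzab]; ring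
          _ ≤ B1*B2 * t ^ max (a+b) 0 + t ^ max (a+b) 0 := by
                have hbb : (0:ℝ) ≤ B1*B2 := by positivity
                nlinarith
          _ = (B1*B2+1) * (t ^ d * t ^ c) := by rw [htab]; ring
          _ = (B1*B2+1)/A0 * t ^ d * (A0 * t ^ c) := by field_simp
          _ ≤ (B1*B2+1)/A0 * t ^ d * Xf n g t m (j+1) := by
                apply mul_le_mul_of_nonneg_left hden_lb (by positivity)
      · have hjn : j + 1 = n + 1 := by omega
        refine ⟨1, 1, one_pos, le_rfl, le_rfl, fun t ht => ?_⟩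
        rw [Xf, if_neg hcase, hjn, hg1]
        norm_num

theorem tropical_frieze_glide_and_periodic (n : ℕ) (f : ℤ × ℤ → ℤ)
    (hb0 : ∀ i : ℤ, f (i, 0) = 0) (hb1 : ∀ i : ℤ, f (i, (n : ℤ) + 1) = 0)
    (hrule : ∀ i j : ℤ, 1 ≤ j → j ≤ (n : ℤ) →
      f (i, j) + f (i + 1, j) = max (f (i + 1, j - 1) + f (i, j + 1)) 0) :
    (∀ i j : ℤ, 1 ≤ j → j ≤ (n : ℤ) → f (i, j) = f (i + j + 1, (n : ℤ) + 1 - j)) ∧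
    (∀ i j : ℤ, 1 ≤ j → j ≤ (n : ℤ) → f (i, j) = f (i + (n : ℤ) + 3, j)) := by
  have glide : ∀ i j : ℤ, 1 ≤ j → j ≤ (n : ℤ) →
      f (i, j) = f (i + j + 1, (n : ℤ) + 1 - j) := by
    intro i j hj1 hj2
    obtain ⟨jn, rfl⟩ : ∃ jn : ℕ, (jn : ℤ) = j := ⟨j.toNat, by omega⟩
    have hjn1 : 1 ≤ jn := by exact_mod_cast hj1
    have hjn2 : jn ≤ n := by exact_mod_cast hj2
    set g : ℕ → ℕ → ℤ := fun m r => f (i + m, r) with hgdef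
    have hg0 : ∀ m, g m 0 = 0 := by
      intro m; simp only [hgdef, Nat.cast_zero]; exact hb0 _
    have hg1 : ∀ m, g m (n+1) = 0 := by
      intro m; simp only [hgdef]; push_cast; exact hb1 _
    have hgr : ∀ m r, 1 ≤ r → r ≤ n →
        g m r + g (m+1) r = max (g (m+1) (r-1) + g m (r+1)) 0 := by
      intro m r h1 h2
      have h := hrule (i + m) r (by exact_mod_cast h1) (by exact_mod_cast h2)
      simp only [hgdef]
      rw [Nat.cast_sub h1]
      push_cast
      rw [← add_assoc]
      exact h
    have key : ∀ t : ℝ, 1 ≤ t → Xf n g t 0 jn = Xf n g t (jn+1) (n+1-jn) := by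
      intro t ht
      have ht0 : (0:ℝ) < t := lt_of_lt_of_le one_pos ht
      have h := frieze_glide n (Xf n g t) (Xf_pos n g t ht0) (Xf_b0 n g t hg0)
        (Xf_b1 n g t hg1) (Xf_rule n g t ht0) jn hjn2 (n+1-jn) 0 (by omega)
      rw [show 0 + jn + 1 = jn + 1 from by omega] at h
      exact h
    obtain ⟨A1, B1, hA1, hA1', hB1, H1⟩ := sandwich n g hg0 hg1 hgr 0 jn (by omega)
    obtain ⟨A2, B2, hA2, hA2', hB2, H2⟩ := sandwich n g hg0 hg1 hgr (jn+1) (n+1-jn) (by omega)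
    have d1 : g 0 jn ≤ g (jn+1) (n+1-jn) := by
      apply exp_le_of_bound A1 B2 hA1
      intro t ht
      calc A1 * t ^ g 0 jn ≤ Xf n g t 0 jn := (H1 t ht).1
      _ = Xf n g t (jn+1) (n+1-jn) := key t ht
      _ ≤ B2 * t ^ g (jn+1) (n+1-jn) := (H2 t ht).2
    have d2 : g (jn+1) (n+1-jn) ≤ g 0 jn := by
      apply exp_le_of_bound A2 B1 hA2
      intro t ht
      calc A2 * t ^ g (jn+1) (n+1-jn) ≤ Xf n g t (jn+1) (n+1-jn) := (H2 t ht).1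
      _ = Xf n g t 0 jn := (key t ht).symm
      _ ≤ B1 * t ^ g 0 jn := (H1 t ht).2
    have e0 : g 0 jn = f (i, (jn : ℤ)) := by
      simp only [hgdef, Nat.cast_zero, add_zero]
    have e1 : g (jn+1) (n+1-jn) = f (i + jn + 1, (n : ℤ) + 1 - jn) := by
      simp only [hgdef]
      rw [Nat.cast_sub (show jn ≤ n + 1 from by omega)]
      push_cast
      rw [← add_assoc]
    rw [e0, e1] at d1 d2
    omega
  refine ⟨glide, ?_⟩
  intro i j h1 h2
  have e1 := glide i j h1 h2
  have e2 := glide (i + j + 1) ((n : ℤ) + 1 - j) (by omega) (by omega)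
  rw [e1, e2]
  rw [show i + j + 1 + ((n:ℤ) + 1 - j) + 1 = i + n + 3 from by ring]
  rw [show (n:ℤ) + 1 - ((n:ℤ) + 1 - j) = j from by ring]
end

section
/- A tropicalized frieze pattern on the strip ℤ × {1, ..., n} with the rule f(i,j) + f(i+1,j) = max(f(i+1,j-1) + f(i,j+1), 0) (boundary zero) is uniquely determined by its values on one diagonal: if f and g both satisfy the rule and f(0, j) = g(0, j) for all 1 ≤ j ≤ n, then f = g. -/
/-!
The rule expresses `f (i + 1, j)` through `f (i, j)`, `f (i, j + 1)` and `f (i + 1, j - 1)`, so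
one column of a tropical frieze determines the next one, entry by entry from the bottom boundary
upwards. The rule is invariant under the glide reflection `(i, j) ↦ (-i, n + 1 - j)`, which turns
this into the statement that a column also determines the previous one. Induction on `i` in both
directions then propagates the diagonal `i = 0` to the whole strip.
-/

structure IsTropicalFrieze (n : ℕ) (f : ℤ × ℤ → ℤ) : Prop where
  bot : ∀ i : ℤ, f (i, 0) = 0
  top : ∀ i : ℤ, f (i, (n : ℤ) + 1) = 0
  rule : ∀ i j : ℤ, 1 ≤ j → j ≤ (n : ℤ) →
    f (i, j) + f (i + 1, j) = max (f (i + 1, j - 1) + f (i, j + 1)) 0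

namespace IsTropicalFrieze

variable {n : ℕ} {f g : ℤ × ℤ → ℤ}

theorem reflect (hf : IsTropicalFrieze n f) :
    IsTropicalFrieze n (fun p => f (-p.1, (n : ℤ) + 1 - p.2)) where
  bot i := by simpa using hf.top (-i)
  top i := by simpa using hf.bot (-i)
  rule i j hj1 hjn := by
    have h := hf.rule (-(i + 1)) ((n : ℤ) + 1 - j) (by omega) (by omega)
    rw [show -(i + 1) + 1 = -i by ring, show (n : ℤ) + 1 - j - 1 = n + 1 - (j + 1) by ring,
      show (n : ℤ) + 1 - j + 1 = n + 1 - (j - 1) by ring] at h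
    rw [add_comm, h, add_comm]

theorem column_eq_of_interior_eq (hf : IsTropicalFrieze n f) (hg : IsTropicalFrieze n g) {i : ℤ}
    (h : ∀ j, 1 ≤ j → j ≤ (n : ℤ) → f (i, j) = g (i, j)) :
    ∀ j, 0 ≤ j → j ≤ (n : ℤ) + 1 → f (i, j) = g (i, j) := by
  intro j hj0 hjn
  rcases hj0.eq_or_lt with rfl | hj0
  · rw [hf.bot, hg.bot]
  rcases hjn.eq_or_lt with rfl | hjn
  · rw [hf.top, hg.top]
  exact h j (by omega) (by omega)

theorem next_column_eq (hf : IsTropicalFrieze n f) (hg : IsTropicalFrieze n g) {i : ℤ}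
    (h : ∀ j, 1 ≤ j → j ≤ (n : ℤ) → f (i, j) = g (i, j)) :
    ∀ j, 1 ≤ j → j ≤ (n : ℤ) → f (i + 1, j) = g (i + 1, j) := by
  have hi := column_eq_of_interior_eq hf hg h
  suffices ∀ j, 0 ≤ j → j ≤ (n : ℤ) → f (i + 1, j) = g (i + 1, j) from
    fun j hj1 hjn => this j (by omega) hjn
  intro j hj0
  induction j, hj0 using Int.leInduction with
  | base => exact fun _ => by rw [hf.bot, hg.bot]
  | succ j hj0 ih =>
    intro hjn
    have hfj := hf.rule i (j + 1) (by omega) hjn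
    have hgj := hg.rule i (j + 1) (by omega) hjn
    rw [add_sub_cancel_right] at hfj hgj
    rw [hi (j + 1) (by omega) (by omega), ih (by omega), hi (j + 1 + 1) (by omega) (by omega)]
      at hfj
    omega

theorem prev_column_eq (hf : IsTropicalFrieze n f) (hg : IsTropicalFrieze n g) {i : ℤ}
    (h : ∀ j, 1 ≤ j → j ≤ (n : ℤ) → f (i, j) = g (i, j)) :
    ∀ j, 1 ≤ j → j ≤ (n : ℤ) → f (i - 1, j) = g (i - 1, j) := by
  have h' : ∀ j, 1 ≤ j → j ≤ (n : ℤ) → f (-(-i), n + 1 - j) = g (-(-i), n + 1 - j) :=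
    fun j hj1 hjn => by rw [neg_neg]; exact h _ (by omega) (by omega)
  intro j hj1 hjn
  have := next_column_eq hf.reflect hg.reflect h' (n + 1 - j) (by omega) (by omega)
  simpa [show -(-i + 1) = i - 1 by ring] using this

theorem eq_of_column_eq (hf : IsTropicalFrieze n f) (hg : IsTropicalFrieze n g) (i₀ : ℤ)
    (h : ∀ j, 1 ≤ j → j ≤ (n : ℤ) → f (i₀, j) = g (i₀, j)) :
    ∀ i j, 1 ≤ j → j ≤ (n : ℤ) → f (i, j) = g (i, j) := by
  intro i
  induction i using Int.inductionOn' (b := i₀) with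
  | zero => exact h
  | succ i _ ih => exact next_column_eq hf hg ih
  | pred i _ ih => exact prev_column_eq hf hg ih

end IsTropicalFrieze

theorem tropical_frieze_determined_by_diagonal (n : ℕ) (f g : ℤ × ℤ → ℤ)
    (hfb0 : ∀ i : ℤ, f (i, 0) = 0) (hfb1 : ∀ i : ℤ, f (i, (n : ℤ) + 1) = 0)
    (hgb0 : ∀ i : ℤ, g (i, 0) = 0) (hgb1 : ∀ i : ℤ, g (i, (n : ℤ) + 1) = 0)
    (hfrule : ∀ i j : ℤ, 1 ≤ j → j ≤ (n : ℤ) →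
      f (i, j) + f (i + 1, j) = max (f (i + 1, j - 1) + f (i, j + 1)) 0)
    (hgrule : ∀ i j : ℤ, 1 ≤ j → j ≤ (n : ℤ) →
      g (i, j) + g (i + 1, j) = max (g (i + 1, j - 1) + g (i, j + 1)) 0)
    (hdiag : ∀ j : ℤ, 1 ≤ j → j ≤ (n : ℤ) → f (0, j) = g (0, j)) :
    ∀ i j : ℤ, 1 ≤ j → j ≤ (n : ℤ) → f (i, j) = g (i, j) :=
  IsTropicalFrieze.eq_of_column_eq ⟨hfb0, hfb1, hfrule⟩ ⟨hgb0, hgb1, hgrule⟩ 0 hdiag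
end

section
/- For every n-tuple (a_1, ..., a_n) ∈ ℤ^n there exists a unique function f : ℤ × {1,...,n} → ℤ satisfying the tropical frieze rule f(i,j) + f(i+1,j) = max(f(i+1,j-1) + f(i,j+1), 0) (with zero boundary convention) and f(0, j) = a_j for 1 ≤ j ≤ n. Hence tropical friezes of type A_n are in bijection with ℤ^n. -/
/-!
Read the frieze column by column. The rule at `(i, j)` can be solved for `f (i + 1, j)` in terms
of `f (i + 1, j - 1)` and column `i`, so column `i + 1` is determined by column `i` going up from
the zero at row `0`. The rule is invariant under the point reflection `(i, j) ↦ (-i, n + 1 - j)`,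
so symmetrically column `i` is determined by column `i + 1` going down from the zero at row
`n + 1`. Starting from column `0` and stepping in both directions gives existence and uniqueness.
-/

open Set

theorem exists_int_chain {α : Type*} (R : α → α → Prop) (next prev : α → α)
    (hnext : ∀ x, R x (next x)) (hprev : ∀ x, R (prev x) x) (x₀ : α) :
    ∃ s : ℤ → α, s 0 = x₀ ∧ ∀ i, R (s i) (s (i + 1)) := by
  refine ⟨fun i => Int.rec (fun m => next^[m] x₀) (fun m => prev^[m + 1] x₀) i, rfl, ?_⟩
  rintro (m | _ | m)
  · show R (next^[m] x₀) (next^[m + 1] x₀)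
    exact Function.iterate_succ_apply' next m x₀ ▸ hnext _
  · exact hprev x₀
  · show R (prev^[m + 2] x₀) (prev^[m + 1] x₀)
    exact Function.iterate_succ_apply' prev (m + 1) x₀ ▸ hprev _

namespace TropicalFrieze

variable (n : ℕ)

def AdjacentColumns (c d : ℤ → ℤ) : Prop :=
  ∀ j : ℤ, 1 ≤ j → j ≤ (n : ℤ) → c j + d j = max (d (j - 1) + c (j + 1)) 0

def reflect (c : ℤ → ℤ) : ℤ → ℤ := fun j => c (n + 1 - j)

def nextCol (c : ℤ → ℤ) (j : ℤ) : ℤ :=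
  if 1 ≤ j ∧ j ≤ (n : ℤ) then max (nextCol c (j - 1) + c (j + 1)) 0 - c j else 0
termination_by j.toNat
decreasing_by omega

def prevCol (c : ℤ → ℤ) : ℤ → ℤ := reflect n (nextCol n (reflect n c))

variable {n}

@[simp]
theorem reflect_reflect (c : ℤ → ℤ) : reflect n (reflect n c) = c := by
  funext j
  simp [reflect]

theorem AdjacentColumns.reflect {c d : ℤ → ℤ} (h : AdjacentColumns n c d) :
    AdjacentColumns n (reflect n d) (reflect n c) := by
  intro j hj₁ hj₂
  have := h (n + 1 - j) (by omega) (by omega)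
  simp only [TropicalFrieze.reflect]
  rw [show (n : ℤ) + 1 - (j - 1) = n + 1 - j + 1 by ring,
    show (n : ℤ) + 1 - (j + 1) = n + 1 - j - 1 by ring, add_comm (d _), this, add_comm]

theorem eqOn_reflect {c c' : ℤ → ℤ} (h : EqOn c c' (Icc 0 (n + 1))) :
    EqOn (reflect n c) (reflect n c') (Icc 0 (n + 1)) :=
  fun j hj => h ⟨by linarith [hj.2], by linarith [hj.1]⟩

theorem nextCol_zero (c : ℤ → ℤ) : nextCol n c 0 = 0 := by
  rw [nextCol, if_neg (by omega)]

theorem nextCol_top (c : ℤ → ℤ) : nextCol n c (n + 1) = 0 := by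
  rw [nextCol, if_neg (by omega)]

theorem adjacentColumns_nextCol (c : ℤ → ℤ) : AdjacentColumns n c (nextCol n c) := by
  intro j hj₁ hj₂
  rw [nextCol, if_pos ⟨hj₁, hj₂⟩]
  ring

theorem prevCol_zero (c : ℤ → ℤ) : prevCol n c 0 = 0 := by
  simpa [prevCol, TropicalFrieze.reflect] using nextCol_top (reflect n c)

theorem prevCol_top (c : ℤ → ℤ) : prevCol n c (n + 1) = 0 := by
  simpa [prevCol, TropicalFrieze.reflect] using nextCol_zero (reflect n c)

theorem adjacentColumns_prevCol (c : ℤ → ℤ) : AdjacentColumns n (prevCol n c) c := by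
  have := (adjacentColumns_nextCol (n := n) (reflect n c)).reflect
  rwa [reflect_reflect] at this

theorem AdjacentColumns.eqOn_right {c c' d d' : ℤ → ℤ} (h : AdjacentColumns n c d)
    (h' : AdjacentColumns n c' d') (hc : EqOn c c' (Icc 0 (n + 1))) (h₀ : d 0 = d' 0)
    (h_top : d (n + 1) = d' (n + 1)) : EqOn d d' (Icc 0 (n + 1)) := by
  have below_top : ∀ j : ℤ, 0 ≤ j → j ≤ n → d j = d' j := by
    intro j hj
    induction j, hj using Int.leInduction with
    | base => exact fun _ => h₀
    | succ j hj ih =>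
      intro hjn
      have hrule := h (j + 1) (by omega) hjn
      have hrule' := h' (j + 1) (by omega) hjn
      rw [add_sub_cancel_right] at hrule hrule'
      rw [ih (by omega), hc ⟨by omega, by omega⟩, hc ⟨by omega, by omega⟩] at hrule
      linarith
  rintro j ⟨hj₀, hj_top⟩
  obtain hj | rfl : j ≤ n ∨ j = n + 1 := by omega
  exacts [below_top j hj₀ hj, h_top]

theorem AdjacentColumns.eqOn_left {c c' d d' : ℤ → ℤ} (h : AdjacentColumns n c d)
    (h' : AdjacentColumns n c' d') (hd : EqOn d d' (Icc 0 (n + 1))) (h₀ : c 0 = c' 0)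
    (h_top : c (n + 1) = c' (n + 1)) : EqOn c c' (Icc 0 (n + 1)) := by
  have := h.reflect.eqOn_right h'.reflect (eqOn_reflect hd) (by simpa [TropicalFrieze.reflect])
    (by simpa [TropicalFrieze.reflect])
  simpa using eqOn_reflect this

end TropicalFrieze

open TropicalFrieze in
/-- Tropical friezes of type `A_n` are in bijection with `ℤ^n` via the diagonal
values at `i = 0`. -/
theorem tropical_frieze_bijection_with_Zn (n : ℕ) (a : ℤ → ℤ) :
    (∃ f : ℤ × ℤ → ℤ,
      (∀ i : ℤ, f (i, 0) = 0) ∧ (∀ i : ℤ, f (i, (n : ℤ) + 1) = 0) ∧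
      (∀ i j : ℤ, 1 ≤ j → j ≤ (n : ℤ) →
        f (i, j) + f (i + 1, j) = max (f (i + 1, j - 1) + f (i, j + 1)) 0) ∧
      (∀ j : ℤ, 1 ≤ j → j ≤ (n : ℤ) → f (0, j) = a j)) ∧
    (∀ f g : ℤ × ℤ → ℤ,
      ((∀ i : ℤ, f (i, 0) = 0) ∧ (∀ i : ℤ, f (i, (n : ℤ) + 1) = 0) ∧
       (∀ i j : ℤ, 1 ≤ j → j ≤ (n : ℤ) →
         f (i, j) + f (i + 1, j) = max (f (i + 1, j - 1) + f (i, j + 1)) 0) ∧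
       (∀ j : ℤ, 1 ≤ j → j ≤ (n : ℤ) → f (0, j) = a j)) →
      ((∀ i : ℤ, g (i, 0) = 0) ∧ (∀ i : ℤ, g (i, (n : ℤ) + 1) = 0) ∧
       (∀ i j : ℤ, 1 ≤ j → j ≤ (n : ℤ) →
         g (i, j) + g (i + 1, j) = max (g (i + 1, j - 1) + g (i, j + 1)) 0) ∧
       (∀ j : ℤ, 1 ≤ j → j ≤ (n : ℤ) → g (0, j) = a j)) →
      ∀ i j : ℤ, 1 ≤ j → j ≤ (n : ℤ) → f (i, j) = g (i, j)) := by
  constructor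
  · let c₀ : ℤ → ℤ := fun j => if 1 ≤ j ∧ j ≤ n then a j else 0
    obtain ⟨s, hs₀, hs⟩ := exists_int_chain (α := {c : ℤ → ℤ // c 0 = 0 ∧ c (n + 1) = 0})
      (fun c d => AdjacentColumns n c.1 d.1)
      (fun c => ⟨nextCol n c.1, nextCol_zero c.1, nextCol_top c.1⟩)
      (fun c => ⟨prevCol n c.1, prevCol_zero c.1, prevCol_top c.1⟩)
      (fun c => adjacentColumns_nextCol c.1) (fun c => adjacentColumns_prevCol c.1)
      ⟨c₀, by simp [c₀], by simp [c₀]⟩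
    refine ⟨fun p => (s p.1).1 p.2, fun i => (s i).2.1, fun i => (s i).2.2, fun i => hs i,
      fun j h₁ h₂ => ?_⟩
    simp [hs₀, c₀, h₁, h₂]
  · rintro f g ⟨hf₀, hf_top, hf, hfa⟩ ⟨hg₀, hg_top, hg, hga⟩ i j h₁ h₂
    have h₀ (i : ℤ) : f (i, 0) = g (i, 0) := (hf₀ i).trans (hg₀ i).symm
    have h_top (i : ℤ) : f (i, n + 1) = g (i, n + 1) := (hf_top i).trans (hg_top i).symm
    have hcol : ∀ i, EqOn (fun j => f (i, j)) (fun j => g (i, j)) (Icc 0 (n + 1)) := by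
      intro i
      induction i using Int.induction_on with
      | zero =>
        rintro j ⟨hj₀, hj_top⟩
        obtain rfl | rfl | hj : j = 0 ∨ j = n + 1 ∨ (1 ≤ j ∧ j ≤ n) := by omega
        exacts [h₀ 0, h_top 0, (hfa j hj.1 hj.2).trans (hga j hj.1 hj.2).symm]
      | succ i ih => exact AdjacentColumns.eqOn_right (hf i) (hg i) ih (h₀ _) (h_top _)
      | pred i ih =>
        exact AdjacentColumns.eqOn_left (hf _) (hg _) (by simpa using ih) (h₀ _) (h_top _)
    exact hcol i ⟨by omega, by omega⟩
end

section
/- Let F_n be a Coxeter-Conway frieze pattern of positive rationals of order n, determined by a diagonal b_1 = 1, b_2, ..., b_{n-2}, b_{n-1} = 1 with a_s = (b_s + b_{s+2})/b_{s+1} being the second-row entries. Then F_n consists of integers if and only if b_s divides b_{s-1} + b_{s+1} for all s = 2, ..., n-2. -/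
/-- A Coxeter–Conway frieze pattern of order `n` (rows `j = 0, …, n-2`, first and last
rows all `1`, positive rational entries, unimodular rule), with diagonal
`b s = F (0, s-1)` for `s = 1, …, n-1`, consists of integers if and only if
`b s` divides `b (s-1) + b (s+1)` for `s = 2, …, n-2`. -/
theorem frieze_pattern_integral_iff_diagonal_divisibility (n : ℕ) (hn : 4 ≤ n)
    (F : ℤ × ℤ → ℚ) (b : ℤ → ℤ)
    (hpos : ∀ i j : ℤ, 0 ≤ j → j ≤ (n : ℤ) - 2 → 0 < F (i, j))
    (hrow0 : ∀ i : ℤ, F (i, 0) = 1)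
    (hrowlast : ∀ i : ℤ, F (i, (n : ℤ) - 2) = 1)
    (hrule : ∀ i j : ℤ, 1 ≤ j → j ≤ (n : ℤ) - 3 →
      F (i, j) * F (i + 1, j) = F (i + 1, j - 1) * F (i, j + 1) + 1)
    (hdiag : ∀ s : ℤ, 1 ≤ s → s ≤ (n : ℤ) - 1 → F (0, s - 1) = (b s : ℚ))
    (hb1 : b 1 = 1) (hblast : b ((n : ℤ) - 1) = 1) :
    (∀ i j : ℤ, 0 ≤ j → j ≤ (n : ℤ) - 2 → ∃ m : ℤ, F (i, j) = (m : ℚ)) ↔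
    (∀ s : ℤ, 2 ≤ s → s ≤ (n : ℤ) - 2 → b s ∣ b (s - 1) + b (s + 1)) := by
  have hn' : (4:ℤ) ≤ (n:ℤ) := by exact_mod_cast hn
  have hFne : ∀ i j : ℤ, 0 ≤ j → j ≤ (n:ℤ) - 2 → F (i, j) ≠ 0 :=
    fun i j h1 h2 => ne_of_gt (hpos i j h1 h2)
  -- diagonal three-term recurrence: F(i,j+1) + F(i,j-1) = F(i+j,1) * F(i,j)
  have keyP0 : ∀ k : ℕ, ∀ i : ℤ, ((k:ℤ)+1) ≤ (n:ℤ) - 3 →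
      F (i, ((k:ℤ)+1)+1) + F (i, ((k:ℤ)+1)-1) = F (i+((k:ℤ)+1), 1) * F (i, (k:ℤ)+1) := by
    intro k
    induction k with
    | zero =>
      intro i _
      have hr := hrule i 1 le_rfl (by linarith)
      norm_num at hr ⊢
      rw [hrow0] at hr ⊢
      linarith
    | succ k ih =>
      intro i hle
      push_cast at hle ⊢
      set j : ℤ := (k:ℤ) + 1 with hjdef
      have h1 := hrule i (j+1) (by omega) (by omega)
      have h2 := hrule i j (by omega) (by omega)
      have hih := ih (i+1) (by omega)
      push_cast at hih
      have e : j + 1 - 1 = j := by ring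
      rw [e] at h1
      have e2 : i + 1 + j = i + (j + 1) := by ring
      rw [e2] at hih
      have hne := hFne (i+1) j (by omega) (by omega)
      have key : F (i+1, j) * (F (i, j+1+1) + F (i, j)) =
          F (i+1, j) * (F (i+(j+1), 1) * F (i, j+1)) := by
        linear_combination (-1:ℚ) * h1 + h2 + F (i, j+1) * hih
      have hc := mul_left_cancel₀ hne key
      have e3 : (k:ℤ) + 1 + 1 = j + 1 := by rw [hjdef]
      rw [e3]
      have e4 : j + 1 - 1 = j := by ring
      rw [e4]
      linarith [hc]
  have keyP : ∀ j : ℤ, 1 ≤ j → j ≤ (n:ℤ) - 3 → ∀ i : ℤ,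
      F (i, j+1) + F (i, j-1) = F (i+j, 1) * F (i, j) := by
    intro j hj1 hj2 i
    have hk : ((j-1).toNat : ℤ) + 1 = j := by omega
    have := keyP0 (j-1).toNat i (by rw [hk]; exact hj2)
    rw [hk] at this
    exact this
  -- anti-diagonal three-term recurrence: F(i+1,j-1) + F(i-1,j+1) = F(i-1,1) * F(i,j)
  have keyD0 : ∀ k : ℕ, ∀ i : ℤ, ((k:ℤ)+1) ≤ (n:ℤ) - 3 →
      F (i+1, ((k:ℤ)+1)-1) + F (i-1, ((k:ℤ)+1)+1) = F (i-1, 1) * F (i, (k:ℤ)+1) := by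
    intro k
    induction k with
    | zero =>
      intro i _
      have hr := hrule (i-1) 1 le_rfl (by linarith)
      have e : i - 1 + 1 = i := by ring
      rw [e] at hr
      norm_num at hr ⊢
      rw [hrow0] at hr ⊢
      linarith
    | succ k ih =>
      intro i hle
      push_cast at hle ⊢
      set j : ℤ := (k:ℤ) + 1 with hjdef
      have h1 := hrule i j (by omega) (by omega)
      have h2 := hrule (i-1) (j+1) (by omega) (by omega)
      have e : i - 1 + 1 = i := by ring
      have e2 : j + 1 - 1 = j := by ring
      rw [e, e2] at h2
      have hih := ih i (by omega)
      push_cast at hih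
      have hne := hFne i j (by omega) (by omega)
      have key : F (i, j) * (F (i+1, j) + F (i-1, j+1+1)) =
          F (i, j) * (F (i-1, 1) * F (i, j+1)) := by
        linear_combination h1 - h2 + F (i, j+1) * hih
      have hc := mul_left_cancel₀ hne key
      have e3 : (k:ℤ) + 1 + 1 = j + 1 := by rw [hjdef]
      rw [e3, e2]
      linarith [hc]
  have keyD : ∀ j : ℤ, 1 ≤ j → j ≤ (n:ℤ) - 3 → ∀ i : ℤ,
      F (i+1, j-1) + F (i-1, j+1) = F (i-1, 1) * F (i, j) := by
    intro j hj1 hj2 i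
    have hk : ((j-1).toNat : ℤ) + 1 = j := by omega
    have := keyD0 (j-1).toNat i (by rw [hk]; exact hj2)
    rw [hk] at this
    exact this
  -- glide symmetry
  have hg : ∀ i : ℤ, F (i+1, (n:ℤ)-3) = F (i-1, 1) := by
    intro i
    have hd := keyD ((n:ℤ)-3) (by linarith) le_rfl i
    have e : (n:ℤ) - 3 + 1 = (n:ℤ) - 2 := by ring
    rw [e, hrowlast] at hd
    have hr := hrule i ((n:ℤ)-3) (by linarith) le_rfl
    rw [e, hrowlast] at hr
    have key : F (i, (n:ℤ)-3) * F (i+1, (n:ℤ)-3) =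
        F (i, (n:ℤ)-3) * F (i-1, 1) := by
      linear_combination hr + hd
    exact mul_left_cancel₀ (hFne i ((n:ℤ)-3) (by linarith) (by linarith)) key
  constructor
  · -- integrality ⇒ divisibility
    intro hint s hs2 hsn
    have hP := keyP (s-1) (by linarith) (by linarith) 0
    have e1 : s - 1 + 1 = s := by ring
    have e2 : s - 1 - 1 = s - 2 := by ring
    have e3 : (0:ℤ) + (s-1) = s - 1 := by ring
    rw [e1, e2, e3] at hP
    have d1 : F (0, s) = (b (s+1) : ℚ) := by
      have h := hdiag (s+1) (by linarith) (by linarith)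
      have e : s + 1 - 1 = s := by ring
      rwa [e] at h
    have d2 : F (0, s-2) = (b (s-1) : ℚ) := by
      have h := hdiag (s-1) (by linarith) (by linarith)
      have e : s - 1 - 1 = s - 2 := by ring
      rwa [e] at h
    have d3 : F (0, s-1) = (b s : ℚ) := by
      have h := hdiag s (by linarith) (by linarith)
      exact h
    obtain ⟨m, hm⟩ := hint (s-1) 1 (by norm_num) (by linarith)
    rw [d1, d2, d3, hm] at hP
    refine ⟨m, ?_⟩
    have : ((b (s-1) + b (s+1) : ℤ) : ℚ) = ((b s * m : ℤ) : ℚ) := by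
      push_cast
      linarith
    exact_mod_cast this
  · -- divisibility ⇒ integrality
    intro hdvd
    have hbne : ∀ s : ℤ, 1 ≤ s → s ≤ (n:ℤ)-1 → ((b s : ℚ)) ≠ 0 := by
      intro s h1 h2
      have hp := hpos 0 (s-1) (by linarith) (by linarith)
      rw [hdiag s h1 h2] at hp
      exact ne_of_gt hp
    -- row 1 entries in the relevant window are integers
    have aInt : ∀ m : ℤ, 1 ≤ m → m ≤ (n:ℤ)-3 → ∃ a : ℤ, F (m, 1) = (a:ℚ) := by
      intro m h1 h3
      have hP := keyP m h1 h3 0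
      have e : (0:ℤ) + m = m := by ring
      rw [e] at hP
      have d1 : F (0, m+1) = (b (m+2) : ℚ) := by
        have h := hdiag (m+2) (by linarith) (by linarith)
        have e : m + 2 - 1 = m + 1 := by ring
        rwa [e] at h
      have d2 : F (0, m-1) = (b m : ℚ) := hdiag m h1 (by linarith)
      have d3 : F (0, m) = (b (m+1) : ℚ) := by
        have h := hdiag (m+1) (by linarith) (by linarith)
        have e : m + 1 - 1 = m := by ring
        rwa [e] at h
      obtain ⟨a, ha⟩ := hdvd (m+1) (by linarith) (by linarith)
      have e5 : m + 1 - 1 = m := by ring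
      have e6 : m + 1 + 1 = m + 2 := by ring
      rw [e5, e6] at ha
      refine ⟨a, ?_⟩
      have hc : (b m : ℚ) + (b (m+2) : ℚ) = (b (m+1) : ℚ) * a := by exact_mod_cast ha
      rw [d1, d2, d3] at hP
      have hbne' := hbne (m+1) (by linarith) (by linarith)
      have key : F (m,1) * (b (m+1):ℚ) = (a:ℚ) * (b (m+1):ℚ) := by
        linear_combination hc - hP
      exact mul_right_cancel₀ hbne' key
    -- column 0
    have col0 : ∀ j : ℤ, 0 ≤ j → j ≤ (n:ℤ)-2 → ∃ m : ℤ, F (0, j) = (m:ℚ) := by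
      intro j h0 h2
      refine ⟨b (j+1), ?_⟩
      have h := hdiag (j+1) (by linarith) (by linarith)
      have e : j + 1 - 1 = j := by ring
      rwa [e] at h
    -- column 1
    have col1' : ∀ k : ℕ, (k:ℤ) ≤ (n:ℤ)-3 → ∃ m : ℤ, F (1, (k:ℤ)) = (m:ℚ) := by
      intro k
      induction k using Nat.strong_induction_on with
      | _ k ih =>
        intro hk
        match k, ih, hk with
        | 0, _, _ => exact ⟨1, by norm_num [hrow0 1]⟩
        | 1, _, hk => 
          obtain ⟨a, ha⟩ := aInt 1 le_rfl (by exact_mod_cast hk)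
          exact ⟨a, by simpa using ha⟩
        | (k+2), ih, hk =>
          have hk' : ((k:ℤ)+2) ≤ (n:ℤ)-3 := by push_cast at hk; linarith
          have hP := keyP ((k:ℤ)+1) (by omega) (by omega) 1
          have e2 : (k:ℤ)+1-1 = (k:ℤ) := by ring
          have e3 : 1+((k:ℤ)+1) = (k:ℤ)+2 := by ring
          have e4 : (k:ℤ)+1+1 = (k:ℤ)+2 := by ring
          rw [e2, e3, e4] at hP
          obtain ⟨a, ha⟩ := aInt ((k:ℤ)+2) (by omega) hk'
          obtain ⟨m1, hm1⟩ := ih (k+1) (by omega) (by push_cast; omega)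
          obtain ⟨m2, hm2⟩ := ih k (by omega) (by omega)
          push_cast at hm1
          refine ⟨a*m1 - m2, ?_⟩
          push_cast
          rw [ha, hm1, hm2] at hP
          linarith
    have col1 : ∀ j : ℤ, 0 ≤ j → j ≤ (n:ℤ)-2 → ∃ m : ℤ, F (1, j) = (m:ℚ) := by
      intro j h0 h2
      by_cases hc : j ≤ (n:ℤ)-3
      · have h := col1' j.toNat (by omega)
        rwa [Int.toNat_of_nonneg h0] at h
      · have hj : j = (n:ℤ)-2 := by omega
        exact ⟨1, by rw [hj, hrowlast]; norm_num⟩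
    -- stepping right
    have stepR : ∀ i : ℤ,
        (∀ j : ℤ, 0 ≤ j → j ≤ (n:ℤ)-2 → ∃ m : ℤ, F (i, j) = (m:ℚ)) →
        (∀ j : ℤ, 0 ≤ j → j ≤ (n:ℤ)-2 → ∃ m : ℤ, F (i+1, j) = (m:ℚ)) →
        (∀ j : ℤ, 0 ≤ j → j ≤ (n:ℤ)-2 → ∃ m : ℤ, F (i+2, j) = (m:ℚ)) := by
      intro i h0 h1 j hj0 hj2
      by_cases hA : j = (n:ℤ)-2
      · exact ⟨1, by rw [hA, hrowlast]; norm_num⟩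
      by_cases hB : j = (n:ℤ)-3
      · have hgi := hg (i+1)
        have e : i+1+1 = i+2 := by ring
        have e' : i+1-1 = i := by ring
        rw [e, e'] at hgi
        obtain ⟨m, hm⟩ := h0 1 (by norm_num) (by linarith)
        exact ⟨m, by rw [hB, hgi]; exact hm⟩
      · have hd := keyD (j+1) (by omega) (by omega) (i+1)
        have e1 : i+1+1 = i+2 := by ring
        have e2 : j+1-1 = j := by ring
        have e3 : i+1-1 = i := by ring
        have e4 : j+1+1 = j+2 := by ring
        rw [e1, e2, e3, e4] at hd
        obtain ⟨a, ha⟩ := h0 1 (by norm_num) (by linarith)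
        obtain ⟨m1, hm1⟩ := h1 (j+1) (by omega) (by omega)
        obtain ⟨m2, hm2⟩ := h0 (j+2) (by omega) (by omega)
        refine ⟨a*m1 - m2, ?_⟩
        rw [ha, hm1, hm2] at hd
        push_cast
        linarith
    -- stepping left
    have stepL : ∀ i : ℤ,
        (∀ j : ℤ, 0 ≤ j → j ≤ (n:ℤ)-2 → ∃ m : ℤ, F (i, j) = (m:ℚ)) →
        (∀ j : ℤ, 0 ≤ j → j ≤ (n:ℤ)-2 → ∃ m : ℤ, F (i+1, j) = (m:ℚ)) →
        (∀ j : ℤ, 0 ≤ j → j ≤ (n:ℤ)-2 → ∃ m : ℤ, F (i-1, j) = (m:ℚ)) := by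
      intro i h0 h1 j hj0 hj2
      have hF1 : ∃ a : ℤ, F (i-1, 1) = (a:ℚ) := by
        have hgi := hg i
        obtain ⟨m, hm⟩ := h1 ((n:ℤ)-3) (by linarith) (by linarith)
        exact ⟨m, by rw [← hgi]; exact hm⟩
      by_cases hA : j = 0
      · exact ⟨1, by rw [hA, hrow0]; norm_num⟩
      by_cases hB : j = 1
      · obtain ⟨a, ha⟩ := hF1
        exact ⟨a, by rw [hB]; exact ha⟩
      · have hd := keyD (j-1) (by omega) (by omega) i
        have e1 : j-1-1 = j-2 := by ring
        have e2 : j-1+1 = j := by ring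
        rw [e1, e2] at hd
        obtain ⟨a, ha⟩ := hF1
        obtain ⟨m1, hm1⟩ := h0 (j-1) (by omega) (by omega)
        obtain ⟨m2, hm2⟩ := h1 (j-2) (by omega) (by omega)
        refine ⟨a*m1 - m2, ?_⟩
        rw [ha, hm1, hm2] at hd
        push_cast
        linarith
    -- induction over columns to the right
    have right : ∀ k : ℕ,
        (∀ j : ℤ, 0 ≤ j → j ≤ (n:ℤ)-2 → ∃ m : ℤ, F ((k:ℤ), j) = (m:ℚ)) ∧
        (∀ j : ℤ, 0 ≤ j → j ≤ (n:ℤ)-2 → ∃ m : ℤ, F ((k:ℤ)+1, j) = (m:ℚ)) := by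
      intro k
      induction k with
      | zero => exact ⟨by simpa using col0, by simpa using col1⟩
      | succ k ih =>
        have e : ((k+1:ℕ):ℤ) = (k:ℤ)+1 := by push_cast; ring
        constructor
        · rw [e]; exact ih.2
        · rw [e]
          have h := stepR (k:ℤ) ih.1 ih.2
          intro j h0 h2
          have e2 : (k:ℤ)+1+1 = (k:ℤ)+2 := by ring
          rw [e2]
          exact h j h0 h2
    -- induction over columns to the left
    have leftc : ∀ k : ℕ,
        (∀ j : ℤ, 0 ≤ j → j ≤ (n:ℤ)-2 → ∃ m : ℤ, F (-(k:ℤ), j) = (m:ℚ)) ∧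
        (∀ j : ℤ, 0 ≤ j → j ≤ (n:ℤ)-2 → ∃ m : ℤ, F (-(k:ℤ)+1, j) = (m:ℚ)) := by
      intro k
      induction k with
      | zero => exact ⟨by simpa using col0, by simpa using col1⟩
      | succ k ih =>
        have e : (((k+1:ℕ)):ℤ) = (k:ℤ)+1 := by push_cast; ring
        constructor
        · rw [e]
          have h := stepL (-(k:ℤ)) ih.1 ih.2
          intro j h0 h2
          have e2 : -((k:ℤ)+1) = -(k:ℤ)-1 := by ring
          rw [e2]
          exact h j h0 h2
        · rw [e]
          have e2 : -((k:ℤ)+1)+1 = -(k:ℤ) := by ring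
          rw [e2]
          exact ih.1
    intro i j h0 h2
    rcases le_or_gt 0 i with hi | hi
    · have h := (right i.toNat).1 j h0 h2
      rwa [Int.toNat_of_nonneg hi] at h
    · have h := (leftc (-i).toNat).1 j h0 h2
      have e : -(((-i).toNat:ℤ)) = i := by omega
      rwa [e] at h
end

section
/- Let f : (ℤ/5) → ℤ satisfy f(k) + f(k+2) = max(f(k+1), 0) for all k. Then f is uniquely determined by the pair (f(0), f(1)), and for every pair (a, b) ∈ ℤ² there exists such an f with f(0) = a, f(1) = b; explicitly f(2) = max(b,0) - a, f(3) = max(f(2),0) - b, f(4) = max(f(3),0) - f(2), and the relation closes up: max(f(4),0) - f(3) = a and max(a,0) - f(4) = b. -/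
theorem A2_tropical_frieze_bijection :
    (∀ f g : ZMod 5 → ℤ,
      (∀ k : ZMod 5, f k + f (k + 2) = max (f (k + 1)) 0) →
      (∀ k : ZMod 5, g k + g (k + 2) = max (g (k + 1)) 0) →
      f 0 = g 0 → f 1 = g 1 → f = g) ∧
    (∀ a b : ℤ, ∃ f : ZMod 5 → ℤ,
      (∀ k : ZMod 5, f k + f (k + 2) = max (f (k + 1)) 0) ∧
      f 0 = a ∧ f 1 = b ∧
      f 2 = max b 0 - a ∧
      f 3 = max (f 2) 0 - b ∧
      f 4 = max (f 3) 0 - f 2 ∧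
      max (f 4) 0 - f 3 = a ∧
      max a 0 - f 4 = b) := by
  constructor
  · intro f g hf hg h0 h1
    have e02 : (0 : ZMod 5) + 2 = 2 := by decide
    have e12 : (1 : ZMod 5) + 2 = 3 := by decide
    have e22 : (2 : ZMod 5) + 2 = 4 := by decide
    have e01 : (0 : ZMod 5) + 1 = 1 := by decide
    have e11 : (1 : ZMod 5) + 1 = 2 := by decide
    have e21 : (2 : ZMod 5) + 1 = 3 := by decide
    have hf0 := hf 0; have hf1 := hf 1; have hf2 := hf 2
    have hg0 := hg 0; have hg1 := hg 1; have hg2 := hg 2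
    rw [e02, e01] at hf0 hg0
    rw [e12, e11] at hf1 hg1
    rw [e22, e21] at hf2 hg2
    have h2 : f 2 = g 2 := by omega
    have h3 : f 3 = g 3 := by omega
    have h4 : f 4 = g 4 := by omega
    funext k
    fin_cases k
    · exact h0
    · exact h1
    · exact h2
    · exact h3
    · exact h4
  · intro a b
    set c : ℤ := max b 0 - a with hc
    set d : ℤ := max c 0 - b with hd
    set e : ℤ := max d 0 - c with he
    refine ⟨![a, b, c, d, e], ?_, rfl, rfl, rfl, rfl, rfl, ?_, ?_⟩
    · intro k
      fin_cases k
      · show a + c = max b 0; omega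
      · show b + d = max c 0; omega
      · show c + e = max d 0; omega
      · show d + a = max e 0; omega
      · show e + b = max a 0; omega
    · show max e 0 - d = a; omega
    · show max a 0 - e = b; omega
end
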